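/- Let C be the category whose objects are the F∞-modules E_0 and E(n) for n ≥ 4, and whose morphisms are splittable injections: injective functions preserving ∔, − and 0 that admit a left inverse also preserving ∔, − and 0. Let k be any nontrivial ring. Then the subfunctor M of the principal projective P_{E_0} : C ⥤ ModuleCat k defined by M(Z) := the k-span of {e_{g ∘ u} : n ≥ 4, u : E_0 ⟶ E(n) in C, g : E(n) ⟶ Z in C} is not finitely generated. In particular, C is not locally Noetherian. -/

import Mathlib

open CategoryTheory
open scoped Classical

def Sset (n : ℕ) : Set (ℕ × ℕ) :=
  {p | 1 ≤ p.1 ∧ p.1 ≤ n ∧ 1 ≤ p.2 ∧ p.2 ≤ n ∧ p.1 ≤ p.2 + 1 ∧ p.2 ≤ p.1 + 2}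

/-- `S(n)` as a sublattice of `ℕ × ℕ` (componentwise max and min). -/
def SL (n : ℕ) : Sublattice (ℕ × ℕ) where
  carrier := Sset n
  supClosed' := by
    rintro ⟨i, k⟩ h1 ⟨l, m⟩ h2
    simp only [Sset, Set.mem_setOf_eq, Prod.sup_def] at h1 h2 ⊢
    omega
  infClosed' := by
    rintro ⟨i, k⟩ h1 ⟨l, m⟩ h2
    simp only [Sset, Set.mem_setOf_eq, Prod.inf_def] at h1 h2 ⊢
    omega

/-- `D(n) = WithBot S(n)`: `S(n)` with a bottom element `O` adjoined. -/
abbrev Dn (n : ℕ) : Type := WithBot ↥(SL n)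

/-- The element `a_{ik}` of `D(n)` (junk value `⊥` if `(i,k) ∉ S(n)`). -/
noncomputable def aElt (n i k : ℕ) : Dn n :=
  if h : (i, k) ∈ SL n then (↑(⟨(i, k), h⟩ : ↥(SL n)) : Dn n) else ⊥
/-- The 8-element sublattice of `ℕ × ℕ` underlying `D_0`. -/
def SL0 : Sublattice (ℕ × ℕ) where
  carrier := {(1,1),(1,2),(2,1),(2,2),(3,3),(3,4),(4,3),(4,4)}
  supClosed' := by
    intro a ha b hb
    simp only [Set.mem_insert_iff, Set.mem_singleton_iff] at *
    rcases ha with rfl|rfl|rfl|rfl|rfl|rfl|rfl|rfl <;>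
      rcases hb with rfl|rfl|rfl|rfl|rfl|rfl|rfl|rfl <;> decide
  infClosed' := by
    intro a ha b hb
    simp only [Set.mem_insert_iff, Set.mem_singleton_iff] at *
    rcases ha with rfl|rfl|rfl|rfl|rfl|rfl|rfl|rfl <;>
      rcases hb with rfl|rfl|rfl|rfl|rfl|rfl|rfl|rfl <;> decide

/-- The 9-element B-module `D_0` (with bottom element `O` adjoined). -/
abbrev D0 : Type := WithBot ↥SL0

/-- The element `A_{ik}` of `D_0` (junk value `⊥` if `(i,k)` is not in the lattice). -/
noncomputable def A0 (i k : ℕ) : D0 :=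
  if h : (i, k) ∈ SL0 then (↑(⟨(i, k), h⟩ : ↥SL0) : D0) else ⊥
/-- F∞-module structure on `Option (Bool × α)` for a meet-semilattice `α`. -/
abbrev Emod (α : Type) : Type := Option (Bool × α)

/-- Negation: `−none = none`, `−some (ε, p) = some (¬ε, p)`. -/
def Emod.neg {α : Type} : Emod α → Emod α :=
  Option.map (fun p => (!p.1, p.2))

/-- Addition: `x ∔ none = none ∔ x = none`, and
`some (ε, p) ∔ some (ε', q) = some (ε, p ⊓ q)` if `ε = ε'`, `none` otherwise. -/
noncomputable def Emod.add {α : Type} [SemilatticeInf α] : Emod α → Emod α → Emod α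
  | some (ε, p), some (ε', q) => if ε = ε' then some (ε, p ⊓ q) else none
  | _, _ => none

/-- Nonzero vectors of the free F∞-module of rank `m`. -/
abbrev FVec (m : ℕ) : Type := {σ : Fin m → Option Bool // σ ≠ fun _ => none}

/-- The free F∞-module of rank `m`, with zero `none`. -/
abbrev Fm (m : ℕ) : Type := Option (FVec m)

/-- Negation on the free F∞-module: Boolean negation on each defined value. -/
def Fm.neg {m : ℕ} : Fm m → Fm m :=
  Option.map (fun σ => ⟨fun i => (σ.val i).map (fun b => !b), by
    intro hcontra
    apply σ.prop
    funext i
    have h := congrFun hcontra i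
    simpa using h⟩)

/-- Addition on the free F∞-module: `none` absorbs; two nonzero vectors add to `none`
if they clash in some coordinate, and otherwise to their pointwise merge. -/
noncomputable def Fm.add {m : ℕ} : Fm m → Fm m → Fm m
  | some σ, some τ =>
      if ∃ (i : Fin m) (b : Bool), σ.val i = some b ∧ τ.val i = some (!b) then none
      else some ⟨fun i => (σ.val i).or (τ.val i), by
        intro hcontra
        apply σ.prop
        funext i
        have h := congrFun hcontra i
        cases hv : σ.val i with
        | none => rfl
        | some b => rw [hv] at h; simp [Option.or] at h⟩
  | _, _ => none

/-- A type with F∞-module operations `0`, `∔`, `−`. -/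
class FStr (α : Type) where
  z : α
  add : α → α → α
  neg : α → α

noncomputable instance {α : Type} [SemilatticeInf α] : FStr (Emod α) :=
  ⟨none, Emod.add, Emod.neg⟩

noncomputable instance {m : ℕ} : FStr (Fm m) :=
  ⟨none, Fm.add, Fm.neg⟩

/-- A map preserving `0`, `∔` and `−`. -/
def IsFHom {α β : Type} [FStr α] [FStr β] (f : α → β) : Prop :=
  f FStr.z = FStr.z ∧ (∀ x y, f (FStr.add x y) = FStr.add (f x) (f y)) ∧
    ∀ x, f (FStr.neg x) = FStr.neg (f x)
/-- A functor `F : C ⥤ ModuleCat k` is finitely generated if finitely many elements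
`α_j ∈ F(Z_j)` exist such that every `F(W)` is the `k`-span of their images. -/
def FunctorFG {C : Type*} [Category C] {k : Type} [Ring k]
    (F : C ⥤ ModuleCat.{0} k) : Prop :=
  ∃ (ℓ : ℕ) (Z : Fin ℓ → C) (α : ∀ j, F.obj (Z j)),
    ∀ W : C, (⊤ : Submodule k (F.obj W)) =
      Submodule.span k {v | ∃ (j : Fin ℓ) (h : Z j ⟶ W), v = F.map h (α j)}

/-- A subfunctor of `F`: a choice of submodules closed under all the maps `F(h)`. -/
def IsSubfunctor {C : Type*} [Category C] {k : Type} [Ring k]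
    (F : C ⥤ ModuleCat.{0} k) (M : ∀ Z : C, Submodule k (F.obj Z)) : Prop :=
  ∀ ⦃Z W : C⦄ (h : Z ⟶ W) (x : F.obj Z), x ∈ M Z → F.map h x ∈ M W

/-- A subfunctor `M` of `F` is finitely generated if finitely many elements
`α_j ∈ M(Z_j)` exist such that every `M(W)` is the `k`-span of their images. -/
def SubfunctorFG {C : Type*} [Category C] {k : Type} [Ring k]
    (F : C ⥤ ModuleCat.{0} k) (M : ∀ Z : C, Submodule k (F.obj Z)) : Prop :=
  ∃ (ℓ : ℕ) (Z : Fin ℓ → C) (α : ∀ j, F.obj (Z j)),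
    (∀ j, α j ∈ M (Z j)) ∧
    ∀ W : C, M W = Submodule.span k {v | ∃ (j : Fin ℓ) (h : Z j ⟶ W), v = F.map h (α j)}

/-- A category is locally Noetherian if for every left-Noetherian ring `k`, every
subfunctor of every finitely generated functor `C ⥤ ModuleCat k` is finitely
generated. -/
def LocallyNoetherian (C : Type*) [Category C] : Prop :=
  ∀ (k : Type) [Ring k] [IsNoetherianRing k] (F : C ⥤ ModuleCat.{0} k),
    FunctorFG F → ∀ M : ∀ Z : C, Submodule k (F.obj Z), IsSubfunctor F M → SubfunctorFG F M
/-- Objects: the F∞-module `E_0` and the F∞-modules `E(n)` for `n ≥ 4`. -/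
inductive EObj : Type
  | e0 : EObj
  | en : (n : ℕ) → 4 ≤ n → EObj

/-- The underlying meet-semilattice of an object. -/
def EObj.base : EObj → Type
  | .e0 => ↥SL0
  | .en n _ => ↥(SL n)

noncomputable instance (X : EObj) : SemilatticeInf X.base := by
  cases X with
  | e0 => exact inferInstanceAs (SemilatticeInf ↥SL0)
  | en n _ => exact inferInstanceAs (SemilatticeInf ↥(SL n))

/-- The underlying F∞-module of an object. -/
abbrev EObj.carrier (X : EObj) : Type := Emod X.base

/-- The category of the F∞-modules `E_0` and `E(n)` (`n ≥ 4`) whose morphisms are the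
splittable injections: injective maps preserving `∔`, `−` and `0` admitting a left
inverse that also preserves `∔`, `−` and `0`. -/
noncomputable instance : Category.{0} EObj where
  Hom X Y := {f : X.carrier → Y.carrier //
    IsFHom f ∧ Function.Injective f ∧
      ∃ t : Y.carrier → X.carrier, IsFHom t ∧ ∀ x, t (f x) = x}
  id X := ⟨id, ⟨rfl, fun _ _ => rfl, fun _ => rfl⟩, fun _ _ h => h,
    ⟨id, ⟨rfl, fun _ _ => rfl, fun _ => rfl⟩, fun _ => rfl⟩⟩
  comp f g := ⟨g.1 ∘ f.1,
    ⟨by simp [Function.comp, f.2.1.1, g.2.1.1],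
     fun x y => by simp [Function.comp, f.2.1.2.1, g.2.1.2.1],
     fun x => by simp [Function.comp, f.2.1.2.2, g.2.1.2.2]⟩,
    fun _ _ h => f.2.2.1 (g.2.2.1 h),
    ⟨f.2.2.2.choose ∘ g.2.2.2.choose,
      ⟨by simp [Function.comp, f.2.2.2.choose_spec.1.1, g.2.2.2.choose_spec.1.1],
       fun x y => by
        simp [Function.comp, f.2.2.2.choose_spec.1.2.1, g.2.2.2.choose_spec.1.2.1],
       fun x => by
        simp [Function.comp, f.2.2.2.choose_spec.1.2.2, g.2.2.2.choose_spec.1.2.2]⟩,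
      fun x => by
        simp [Function.comp, f.2.2.2.choose_spec.2, g.2.2.2.choose_spec.2]⟩⟩
  id_comp f := rfl
  comp_id f := rfl
  assoc f g h := rfl

/-- The generating set of the subfunctor `M` of the principal projective `P_{E_0}`:
the basis vectors `e_{g ∘ u}` for `u : E_0 ⟶ E(n)`, `g : E(n) ⟶ Z`, `n ≥ 4`. -/
def MsetE (k : Type) [Ring k] (Z : EObj) : Set ((EObj.e0 ⟶ Z) →₀ k) :=
  {v | ∃ (n : ℕ) (h4 : 4 ≤ n) (u : EObj.e0 ⟶ EObj.en n h4) (g : EObj.en n h4 ⟶ Z),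
    v = Finsupp.single (u ≫ g) (1 : k)}


/-!
Every morphism `E(m) ⟶ E(N)` is induced, on the second coordinate, by an injective
meet-homomorphism `φ : S(m) → S(N)`. Since `S(N)` is a staircase of width two, if `y ≰ x` then
the coordinate sum of `x ⊓ y` is at most 2 below that of `x`; walking up from `(1,1)` through
such meets shows that `φ` at most doubles coordinate sums away from the top element `(m,m)`.
The corner morphism `E_0 ⟶ E(N)` hits `(1,1)`, `(N-1,N)` and `(N,N-1)`, whose meet `(N-1,N-1)`
has sum `2N-2`, so it factors through `E(m)` only if `N < 2m`. But the images of finitely many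
elements of `M` only involve morphisms factoring through `E(m)` for boundedly many `m` (there are
no morphisms `E(m) ⟶ E_0`), while every corner morphism lies in `M`. For `k = ℤ` this contradicts
local Noetherianity, `P_{E_0}` being generated by `e_{𝟙}`.
-/

lemma InfHom.map_le_map_iff_of_injective {α β : Type*} [SemilatticeInf α] [SemilatticeInf β]
    {φ : InfHom α β} (hφ : Function.Injective φ) {a b : α} : φ a ≤ φ b ↔ a ≤ b :=
  ⟨fun h => inf_eq_left.1 (hφ (by rw [map_inf, inf_eq_left.2 h])),
    fun h => OrderHomClass.mono φ h⟩

lemma mem_SL {n : ℕ} {p : ℕ × ℕ} :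
    p ∈ SL n ↔ 1 ≤ p.1 ∧ p.1 ≤ n ∧ 1 ≤ p.2 ∧ p.2 ≤ n ∧ p.1 ≤ p.2 + 1 ∧ p.2 ≤ p.1 + 2 :=
  Iff.rfl

lemma mem_SL0 {p : ℕ × ℕ} :
    p ∈ SL0 ↔ 1 ≤ p.1 ∧ p.1 ≤ 4 ∧ 1 ≤ p.2 ∧ p.2 ≤ 4 ∧
      (p.1 ≤ 2 ∧ p.2 ≤ 2 ∨ 3 ≤ p.1 ∧ 3 ≤ p.2) := by
  obtain ⟨a, b⟩ := p
  change (a, b) ∈ ({(1,1),(1,2),(2,1),(2,2),(3,3),(3,4),(4,3),(4,4)} : Set (ℕ × ℕ)) ↔ _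
  simp only [Set.mem_insert_iff, Set.mem_singleton_iff, Prod.mk.injEq]
  omega

lemma natCard_SL0 : Nat.card SL0 = 8 := by
  change Nat.card ↑({(1,1),(1,2),(2,1),(2,2),(3,3),(3,4),(4,3),(4,4)} : Set (ℕ × ℕ)) = 8
  rw [Nat.card_coe_set_eq]
  simp [Set.ncard_insert_of_notMem]

namespace SL

lemma sum_le_sum_inf_add_two {N : ℕ} {a b : ℕ × ℕ} (ha : a ∈ SL N) (hb : b ∈ SL N)
    (hba : ¬b ≤ a) : a.1 + a.2 ≤ (a ⊓ b).1 + (a ⊓ b).2 + 2 := by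
  rw [mem_SL] at ha hb
  rw [Prod.le_def] at hba
  simp only [Prod.fst_inf, Prod.snd_inf]
  omega

lemma exists_not_le_sum_inf_add_one {m : ℕ} {x : ℕ × ℕ} (hx : x ∈ SL m)
    (hbot : x ≠ (1, 1)) (htop : x ≠ (m, m)) :
    ∃ y ∈ SL m, ¬y ≤ x ∧ (x ⊓ y).1 + (x ⊓ y).2 + 1 = x.1 + x.2 := by
  obtain ⟨i, k⟩ := x
  simp only [mem_SL, ne_eq, Prod.mk.injEq] at hx hbot htop
  by_cases hik : i < k
  · refine ⟨(i + 1, k - 1), ?_⟩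
    simp only [mem_SL, Prod.le_def, Prod.fst_inf, Prod.snd_inf]
    omega
  · refine ⟨(i - 1, k + 1), ?_⟩
    simp only [mem_SL, Prod.le_def, Prod.fst_inf, Prod.snd_inf]
    omega

variable {m N : ℕ} {φ : InfHom (SL m) (SL N)}

lemma sum_map_add_two_le (hφ : Function.Injective φ) (h11 : ∃ p, (φ p : ℕ × ℕ) = (1, 1)) :
    ∀ x : SL m, (x : ℕ × ℕ) ≠ (m, m) →
      (φ x : ℕ × ℕ).1 + (φ x : ℕ × ℕ).2 + 2 ≤ 2 * ((x : ℕ × ℕ).1 + (x : ℕ × ℕ).2) := by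
  have hbot : ∀ x : SL m, (x : ℕ × ℕ) = (1, 1) → (φ x : ℕ × ℕ) = (1, 1) := by
    obtain ⟨p, hp⟩ := h11
    intro x hx
    have hxp : (φ x : ℕ × ℕ) ≤ φ p := OrderHomClass.mono φ (by
      have := p.2; rw [mem_SL] at this; rw [← Subtype.coe_le_coe, hx, Prod.le_def]; omega)
    have := (φ x).2
    rw [hp, Prod.le_def] at hxp
    rw [mem_SL] at this
    exact Prod.ext (by omega) (by omega)
  intro x
  induction hs : (x : ℕ × ℕ).1 + (x : ℕ × ℕ).2 using Nat.strong_induction_on generalizing x with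
  | _ s ih =>
  intro htop
  have hx := x.2
  rw [mem_SL] at hx
  by_cases h1 : (x : ℕ × ℕ) = (1, 1)
  · rw [hbot x h1]
    rw [h1] at hs
    omega
  obtain ⟨y, hy, hyx, hsum⟩ := exists_not_le_sum_inf_add_one x.2 h1 htop
  have hz : ((x ⊓ ⟨y, hy⟩ : SL m) : ℕ × ℕ) = ↑x ⊓ y := rfl
  have hstep := sum_le_sum_inf_add_two (φ x).2 (φ ⟨y, hy⟩).2
    (by rwa [Subtype.coe_le_coe, InfHom.map_le_map_iff_of_injective hφ, ← Subtype.coe_le_coe])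
  rw [← Sublattice.coe_inf, ← map_inf] at hstep
  have hztop : ((x ⊓ ⟨y, hy⟩ : SL m) : ℕ × ℕ) ≠ (m, m) := by
    rw [hz]; intro h; rw [h] at hsum; omega
  have hz_bound := ih _ (by rw [hz]; omega) _ rfl hztop
  rw [hz] at hz_bound
  omega

lemma lt_two_mul_of_mem_range (hφ : Function.Injective φ) (h11 : ∃ p, (φ p : ℕ × ℕ) = (1, 1))
    (hl : ∃ p, (φ p : ℕ × ℕ) = (N - 1, N)) (hr : ∃ p, (φ p : ℕ × ℕ) = (N, N - 1)) :
    N < 2 * m := by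
  obtain ⟨a, ha⟩ := hl
  obtain ⟨b, hb⟩ := hr
  have hN := (φ a).2
  rw [ha, mem_SL] at hN
  have hq : (φ (a ⊓ b) : ℕ × ℕ) = (N - 1, N - 1) := by
    rw [map_inf, Sublattice.coe_inf, ha, hb, Prod.ext_iff]
    simp only [Prod.fst_inf, Prod.snd_inf]
    omega
  have htop : ((a ⊓ b : SL m) : ℕ × ℕ) ≠ (m, m) := by
    intro h
    have hba : b ≤ a := by
      refine (show b ≤ a ⊓ b from ?_).trans inf_le_left
      have := b.2
      rw [← Subtype.coe_le_coe, h, Prod.le_def]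
      rw [mem_SL] at this
      omega
    have := OrderHomClass.mono φ hba
    rw [← Subtype.coe_le_coe, ha, hb, Prod.le_def] at this
    omega
  have hbound := sum_map_add_two_le hφ h11 (a ⊓ b) htop
  have hab := (a ⊓ b).2
  rw [mem_SL] at hab
  rw [Ne, Prod.ext_iff] at htop
  rw [hq] at hbound
  omega

end SL

namespace Emod

lemma add_some_some {α : Type} [SemilatticeInf α] (ε ε' : Bool) (p q : α) :
    Emod.add (some (ε, p)) (some (ε', q)) = if ε = ε' then some (ε, p ⊓ q) else none :=
  rfl

def map {α β : Type} (θ : α → β) : Emod α → Emod β :=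
  Option.map (Prod.map id θ)

lemma isFHom_map {α β : Type} [SemilatticeInf α] [SemilatticeInf β] (θ : InfHom α β) :
    IsFHom (map θ) := by
  refine ⟨rfl, ?_, ?_⟩
  · rintro (_ | ⟨ε, p⟩) (_ | ⟨ε', q⟩) <;> try rfl
    show map θ (Emod.add _ _) = Emod.add _ _
    by_cases h : ε = ε' <;> simp [add_some_some, map, h]
  · rintro (_ | ⟨ε, p⟩) <;> rfl

lemma leftInverse_map {α β : Type} {θ : α → β} {ψ : β → α} (h : Function.LeftInverse ψ θ) :
    Function.LeftInverse (map ψ) (map θ) := by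
  rintro (_ | ⟨ε, p⟩)
  · rfl
  · simp [map, h p]

end Emod

namespace EObj

noncomputable def homOfLeftInverse {X Y : EObj} (θ : InfHom X.base Y.base)
    (ψ : InfHom Y.base X.base) (h : Function.LeftInverse ψ θ) : X ⟶ Y :=
  ⟨Emod.map θ, Emod.isFHom_map θ, (Emod.leftInverse_map h).injective,
    Emod.map ψ, Emod.isFHom_map ψ, Emod.leftInverse_map h⟩

lemma hom_apply_some_ne_none {X Y : EObj} (G : X ⟶ Y) (x : Bool × X.base) :
    G.1 (some x) ≠ none := fun h =>
  Option.some_ne_none x (G.2.2.1 (h.trans G.2.1.1.symm))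

lemma exists_infHom {X Y : EObj} (G : X ⟶ Y) :
    ∃ φ : InfHom X.base Y.base, Function.Injective φ ∧
      ∀ x ε q, G.1 x = some (ε, q) → q ∈ Set.range φ := by
  obtain ⟨⟨hzero, hadd, hneg⟩, hinj, -⟩ := G.2
  have hsome : ∀ p, ∃ c r, G.1 (some (true, p)) = some (c, r) := fun p => by
    obtain ⟨⟨c, r⟩, h⟩ := Option.ne_none_iff_exists'.1 (hom_apply_some_ne_none G (true, p))
    exact ⟨c, r, h⟩
  choose c r hcr using hsome
  have hmeet : ∀ p q, c p = c q ∧ r (p ⊓ q) = r p ⊓ r q := by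
    intro p q
    have h : G.1 (some (true, p ⊓ q)) = Emod.add (some (c p, r p)) (some (c q, r q)) := by
      rw [← hcr, ← hcr]
      exact hadd (some (true, p)) (some (true, q))
    rw [hcr, Emod.add_some_some] at h
    split_ifs at h with hc
    exact ⟨hc, (Prod.mk.inj (Option.some.inj h)).2⟩
  have hsign : ∀ ε p, ∃ c', G.1 (some (ε, p)) = some (c', r p) := by
    rintro (_ | _) p
    · exact ⟨!c p, (hneg (some (true, p))).trans (by rw [hcr]; rfl)⟩
    · exact ⟨c p, hcr p⟩
  refine ⟨⟨r, fun p q => (hmeet p q).2⟩, fun p q hpq => ?_, ?_⟩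
  · have h : G.1 (some (true, p)) = G.1 (some (true, q)) := by
      rw [hcr, hcr, (hmeet p q).1]
      exact congrArg _ (congrArg _ hpq)
    simpa using hinj h
  · rintro (_ | ⟨ε, p⟩) ε' q h
    · exact absurd (hzero.symm.trans h) (by simp [FStr.z])
    · obtain ⟨c', hc'⟩ := hsign ε p
      rw [hc'] at h
      exact ⟨p, (Prod.mk.inj (Option.some.inj h)).2⟩

lemma isEmpty_hom_en_e0 {n : ℕ} (hn : 4 ≤ n) : IsEmpty (EObj.en n hn ⟶ EObj.e0) := by
  refine ⟨fun g => ?_⟩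
  obtain ⟨φ, hφ, -⟩ := exists_infHom g
  let ψ : SL n → SL0 := φ
  let ι : Fin 9 → SL n := fun i =>
    ⟨![(1, 1), (1, 2), (1, 3), (2, 1), (2, 2), (2, 3), (2, 4), (3, 2), (3, 3)] i, by
      fin_cases i <;> simp [mem_SL] <;> omega⟩
  have hι : Function.Injective ι := fun i j h =>
    (by decide : Function.Injective
      ![((1 : ℕ), (1 : ℕ)), (1, 2), (1, 3), (2, 1), (2, 2), (2, 3), (2, 4), (3, 2), (3, 3)])
      (congrArg Subtype.val h)
  have : Finite SL0 := Nat.finite_of_card_ne_zero (by rw [natCard_SL0]; omega)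
  have := Nat.card_le_card_of_injective (ψ ∘ ι) ((show Function.Injective ψ from hφ).comp hι)
  rw [natCard_SL0, Nat.card_fin] at this
  omega

end EObj

section Corner

variable (N : ℕ)

def cornerEmbed (p : ℕ × ℕ) : ℕ × ℕ :=
  if p.1 ≤ 2 then p else (p.1 + (N - 4), p.2 + (N - 4))

def cornerChain (i : ℕ) : ℕ × ℕ :=
  if i ≤ 1 then (1, 2) else if i ≤ N - 2 then (2, 2) else if i ≤ N - 1 then (3, 4) else (4, 4)

lemma cornerChain_mem (i : ℕ) : cornerChain N i ∈ SL0 ∧ (cornerChain N i).swap ∈ SL0 := by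
  unfold cornerChain
  split_ifs <;> simp [mem_SL0]

lemma cornerChain_mono : Monotone (cornerChain N) := by
  intro i j hij
  unfold cornerChain
  split_ifs <;> simp only [Prod.mk_le_mk] <;> omega

variable {N} (hN : 4 ≤ N)

def cornerEmbedHom : InfHom SL0 (SL N) where
  toFun p := ⟨cornerEmbed N p, by
    have := mem_SL0.1 p.2
    unfold cornerEmbed
    split_ifs <;> simp only [mem_SL] <;> omega⟩
  map_inf' := by
    rintro ⟨⟨a, b⟩, hp⟩ ⟨⟨c, d⟩, hq⟩
    rw [mem_SL0] at hp hq
    apply Subtype.ext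
    simp only [Sublattice.coe_inf, cornerEmbed, Prod.ext_iff, Prod.fst_inf, Prod.snd_inf,
      Prod.mk_inf_mk]
    split_ifs <;> omega

def cornerRetractHom : InfHom (SL N) SL0 where
  toFun x := ⟨cornerChain N (x : ℕ × ℕ).1 ⊓ (cornerChain N (x : ℕ × ℕ).2).swap,
    SL0.inf_mem (cornerChain_mem N _).1 (cornerChain_mem N _).2⟩
  map_inf' x y := by
    apply Subtype.ext
    simp only [Sublattice.coe_inf, Prod.fst_inf, Prod.snd_inf, (cornerChain_mono N).map_inf,
      Prod.swap_inf]
    exact inf_inf_inf_comm _ _ _ _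

lemma cornerRetract_leftInverse :
    Function.LeftInverse (cornerRetractHom (N := N)) (cornerEmbedHom hN) := by
  intro p
  have := mem_SL0.1 p.2
  apply Subtype.ext
  show cornerChain N (cornerEmbed N p).1 ⊓ (cornerChain N (cornerEmbed N p).2).swap = p
  unfold cornerChain cornerEmbed
  rw [Prod.ext_iff]
  split_ifs <;> simp only [Prod.fst_inf, Prod.snd_inf, Prod.swap] <;> omega

noncomputable def corner : EObj.e0 ⟶ EObj.en N hN :=
  EObj.homOfLeftInverse (cornerEmbedHom hN) cornerRetractHom (cornerRetract_leftInverse hN)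

lemma lt_two_mul_of_corner_eq_comp {m : ℕ} {hm : 4 ≤ m} (u : EObj.e0 ⟶ EObj.en m hm)
    (g : EObj.en m hm ⟶ EObj.en N hN) (h : u ≫ g = corner hN) : N < 2 * m := by
  obtain ⟨φ, hφ, hrange⟩ := EObj.exists_infHom g
  let ψ : InfHom (SL m) (SL N) := φ
  have hmem : ∀ p : SL0, ∃ x, (ψ x : ℕ × ℕ) = cornerEmbed N p := by
    intro p
    obtain ⟨⟨ε, q⟩, hu⟩ := Option.ne_none_iff_exists'.1 (EObj.hom_apply_some_ne_none u (true, p))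
    have hg : g.1 (some (ε, q)) = some (true, cornerEmbedHom hN p) := by
      rw [← hu]; exact congrArg (fun f => f.1 (some (true, p))) h
    obtain ⟨x, hx⟩ := hrange _ _ _ hg
    exact ⟨x, congrArg Subtype.val hx⟩
  refine SL.lt_two_mul_of_mem_range (φ := ψ) hφ ?_ ?_ ?_
  · simpa [cornerEmbed] using hmem ⟨(1, 1), mem_SL0.2 (by omega)⟩
  · obtain ⟨x, hx⟩ := hmem ⟨(3, 4), mem_SL0.2 (by omega)⟩
    exact ⟨x, by rw [hx]; simp [cornerEmbed]; omega⟩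
  · obtain ⟨x, hx⟩ := hmem ⟨(4, 3), mem_SL0.2 (by omega)⟩
    exact ⟨x, by rw [hx]; simp [cornerEmbed]; omega⟩

end Corner

def EObj.rank : EObj → ℕ
  | .e0 => 0
  | .en n _ => n

def FactorsThroughRankLE (B : ℕ) {Y : EObj} (f : EObj.e0 ⟶ Y) : Prop :=
  ∃ (m : ℕ) (hm : 4 ≤ m) (u : EObj.e0 ⟶ EObj.en m hm) (g : EObj.en m hm ⟶ Y), m ≤ B ∧ u ≫ g = f

noncomputable def principalProjective (k : Type) [Ring k] (X : EObj) : EObj ⥤ ModuleCat.{0} k :=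
  coyoneda.obj (Opposite.op X) ⋙ ModuleCat.free k

lemma principalProjective_map_apply (k : Type) [Ring k] {X Z W : EObj} (h : Z ⟶ W)
    (x : (X ⟶ Z) →₀ k) : (principalProjective k X).map h x = Finsupp.mapDomain (· ≫ h) x :=
  rfl

lemma MsetE_e0_eq_empty (k : Type) [Ring k] : MsetE k EObj.e0 = ∅ :=
  Set.eq_empty_of_forall_notMem fun _ ⟨_, hn, _, g, _⟩ =>
    (EObj.isEmpty_hom_en_e0 hn).false g

lemma mapDomain_mem_supported_of_rank_le (k : Type) [Ring k] {Z W : EObj} {B : ℕ}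
    (hZ : Z.rank ≤ B) {x : (EObj.e0 ⟶ Z) →₀ k} (hx : x ∈ Submodule.span k (MsetE k Z))
    (h : Z ⟶ W) :
    Finsupp.mapDomain (· ≫ h) x ∈ Finsupp.supported k k {f | FactorsThroughRankLE B f} := by
  cases Z with
  | e0 =>
    rw [MsetE_e0_eq_empty, Submodule.span_empty, Submodule.mem_bot] at hx
    rw [hx, Finsupp.mapDomain_zero]
    exact zero_mem _
  | en n hn =>
    refine Finsupp.supported_comap_lmapDomain k k (· ≫ h) _ ?_
    rw [Finsupp.mem_supported]
    intro f _
    exact ⟨n, hn, f, h, hZ, rfl⟩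

lemma not_subfunctorFG (k : Type) [Ring k] [Nontrivial k] :
    ¬SubfunctorFG (principalProjective k EObj.e0) fun Z => Submodule.span k (MsetE k Z) := by
  rintro ⟨ℓ, Z, α, hα, hspan⟩
  set B := Finset.univ.sup fun j => (Z j).rank
  have hN : 4 ≤ 2 * B + 4 := by omega
  have hcorner : Finsupp.single (corner hN) (1 : k) ∈
      Finsupp.supported k k {f | FactorsThroughRankLE B f} := by
    refine Submodule.span_le.2 ?_ ((hspan _).le
      (Submodule.subset_span ⟨_, hN, corner hN, 𝟙 _, by rw [Category.comp_id]⟩))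
    rintro _ ⟨j, h, rfl⟩
    exact mapDomain_mem_supported_of_rank_le k
      (Finset.le_sup (f := fun j => (Z j).rank) (Finset.mem_univ j)) (hα j) h
  obtain ⟨m, hm, u, g, hmB, hug⟩ := (Finsupp.mem_supported k _).1 hcorner
    (by simp : corner hN ∈ (Finsupp.single (corner hN) (1 : k)).support)
  have := lt_two_mul_of_corner_eq_comp hN u g hug
  omega

lemma principalProjective_fg (k : Type) [Ring k] (X : EObj) :
    FunctorFG (principalProjective k X) := by
  refine ⟨1, fun _ => X, fun _ => Finsupp.single (𝟙 X) 1, fun W => ?_⟩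
  change ⊤ = Submodule.span k {v : (X ⟶ W) →₀ k | ∃ (_ : Fin 1) (h : X ⟶ W),
    v = Finsupp.mapDomain (· ≫ h) (Finsupp.single (𝟙 X) 1)}
  have hgen : {v : (X ⟶ W) →₀ k | ∃ (_ : Fin 1) (h : X ⟶ W),
      v = Finsupp.mapDomain (· ≫ h) (Finsupp.single (𝟙 X) 1)} =
      Set.range Finsupp.basisSingleOne := by
    ext v
    simp [Finsupp.coe_basisSingleOne, eq_comm]
  rw [hgen, Module.Basis.span_eq]

lemma isSubfunctor_span_MsetE (k : Type) [Ring k] :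
    IsSubfunctor (principalProjective k EObj.e0) fun Z => Submodule.span k (MsetE k Z) := by
  intro Z W h x hx
  refine (Submodule.map_span_le _ _ _).2 ?_ (Submodule.mem_map_of_mem hx)
  rintro _ ⟨n, hn, u, g, rfl⟩
  refine Submodule.subset_span ⟨n, hn, u, g ≫ h, ?_⟩
  rw [principalProjective_map_apply, Finsupp.mapDomain_single, Category.assoc]

/-- The subfunctor `M` of the principal projective `P_{E_0} : C ⥤ ModuleCat k`
spanned by the `e_{g ∘ u}` (for `u : E_0 ⟶ E(n)`, `g : E(n) ⟶ Z`, `n ≥ 4`) is not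
finitely generated; in particular `C` is not locally Noetherian. -/
theorem stmt13 (k : Type) [Ring k] [Nontrivial k] :
    (¬∃ (ℓ : ℕ) (Z : Fin ℓ → EObj) (α : ∀ j, (EObj.e0 ⟶ Z j) →₀ k),
      (∀ j, α j ∈ Submodule.span k (MsetE k (Z j))) ∧
      ∀ W : EObj, Submodule.span k (MsetE k W) =
        Submodule.span k
          {v | ∃ (j : Fin ℓ) (h : Z j ⟶ W), v = Finsupp.mapDomain (· ≫ h) (α j)}) ∧
    ¬LocallyNoetherian EObj :=
  ⟨not_subfunctorFG k, fun h => not_subfunctorFG ℤ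
    (h ℤ _ (principalProjective_fg ℤ EObj.e0) _ (isSubfunctor_span_MsetE ℤ))⟩
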